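/- arXiv:2310.14091 — 8 statements merged into one kernel-verified Lean document; each statement's English description precedes it below -/
import Mathlib

section
/- Let x₁, x₂ ∈ ℝ² be linearly independent vectors with 0 < ‖x₁‖ ≤ ‖x₂‖, and suppose the angle θ between x₁ and x₂ (so cos θ = ⟨x₁,x₂⟩/(‖x₁‖·‖x₂‖)) satisfies π/3 ≤ θ ≤ π/2. Let z ∈ ℝ² be the fundamental deep hole, i.e. the unique point with ‖z‖ = ‖z − x₁‖ = ‖z − x₂‖. If ‖x₂‖ ≤ 2·sin(θ + π/6)·‖x₁‖, then the deep hole lattice H = span_ℤ{x₁, z} is well-rounded; more precisely, ‖z‖ = ‖x₁ − z‖ and every nonzero v ∈ span_ℤ{x₁, z} satisfies ‖v‖ ≥ ‖z‖. -/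
open scoped RealInnerProductSpace

private lemma aux_int_case (m n : ℤ) (h : ¬(m = 0 ∧ n = 0)) :
    (n = 0 ∧ 1 ≤ m^2) ∨ (0 ≤ m*(m+n) ∧ n^2 = 1) ∨ 4 ≤ n^2 := by
  have hn : n ≤ -2 ∨ n = -1 ∨ n = 0 ∨ n = 1 ∨ 2 ≤ n := by omega
  rcases hn with hn|hn|hn|hn|hn
  · right; right; nlinarith
  · right; left
    refine ⟨?_, by rw [hn]; ring⟩
    subst hn
    rcases le_or_gt 1 m with h'|h'
    · nlinarith
    · have : m ≤ 0 := by omega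
      nlinarith
  · left
    refine ⟨hn, ?_⟩
    have hm : m ≠ 0 := fun hm => h ⟨hm, hn⟩
    rcases lt_or_gt_of_ne hm with h'|h' <;> nlinarith
  · right; left
    refine ⟨?_, by rw [hn]; ring⟩
    subst hn
    rcases le_or_gt 0 m with h'|h'
    · positivity
    · have : m + 1 ≤ 0 := by omega
      nlinarith
  · right; right; nlinarith

private lemma aux_bounds (a b r s c t : ℝ) (ha : 0 < a) (hab : a ≤ b) (hs : 0 < s)
    (hc0 : 0 ≤ c) (hc : c ≤ 1/2) (hs2 : s^2 = 1 - c^2) (ht : t^2 = 3) (ht0 : 0 ≤ t)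
    (hbB : b ≤ (t*s + c)*a) (hkey : 4*r^2*s^2 = a^2 + b^2 - 2*(a*b*c)) :
    r^2 ≤ a^2 ∧ a^2 ≤ 3*r^2 := by
  have hac : a*c ≤ a := by nlinarith
  have hac2 : a*c ≤ a/2 := by nlinarith
  constructor
  · have h1 : 0 ≤ (t*s + c)*a - b := by linarith
    have h2 : 0 ≤ (t*s + c)*a + b - 2*a*c := by
      have e : (t*s + c)*a + b - 2*a*c = t*s*a + (b - a*c) := by ring
      rw [e]
      have : 0 ≤ t*s*a := by positivity
      linarith
    have hid : 4*s^2*(a^2 - r^2) = ((t*s + c)*a - b)*((t*s + c)*a + b - 2*a*c) := by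
      linear_combination (-1 : ℝ)*hkey + a^2*hs2 + (-(a^2*s^2))*ht
    nlinarith [mul_nonneg h1 h2, mul_pos hs hs]
  · have h1 : 0 ≤ (b - a)*(b + a - 2*a*c) := by
      apply mul_nonneg (by linarith)
      linarith
    have h2 : 0 ≤ 2*a^2*(1 - c)*(1 - 2*c) := by
      apply mul_nonneg (mul_nonneg (by positivity) (by linarith))
      linarith
    have hid2 : 4*s^2*(3*r^2 - a^2) = 3*((b - a)*(b + a - 2*a*c)) + 2*a^2*(1 - c)*(1 - 2*c) := by
      linear_combination (3 : ℝ)*hkey + (-(4*a^2))*hs2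
    nlinarith [mul_pos hs hs]

private lemma aux_min (a r M N : ℝ) (ha : 0 < a) (hr : 0 ≤ r)
    (hra : r^2 ≤ a^2) (h3r : a^2 ≤ 3*r^2)
    (hcase : (N = 0 ∧ 1 ≤ M^2) ∨ (0 ≤ M*(M+N) ∧ N^2 = 1) ∨ 4 ≤ N^2) :
    r^2 ≤ M^2*a^2 + M*N*a^2 + N^2*r^2 := by
  rcases hcase with ⟨h1, h2⟩|⟨h1, h2⟩|h1
  · subst h1; nlinarith [sq_nonneg a]
  · nlinarith [sq_nonneg a]
  · have hq : 0 ≤ r^2 - a^2/4 := by linarith [sq_nonneg r]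
    have hprod : 0 ≤ (N^2 - 4)*(r^2 - a^2/4) := mul_nonneg (by linarith) hq
    nlinarith [mul_nonneg (sq_nonneg (M + N/2)) (sq_nonneg a)]

private lemma aux_sqle (x y : ℝ) (hx : 0 ≤ x) (hy : 0 ≤ y) (h : x^2 ≤ y^2) : x ≤ y := by
  nlinarith

/-- If `x₁, x₂` are linearly independent with `0 < ‖x₁‖ ≤ ‖x₂‖`, the angle `θ`
between them lies in `[π/3, π/2]`, `z` is the fundamental deep hole (circumcenter of the
triangle `0, x₁, x₂`), and `‖x₂‖ ≤ 2 sin(θ + π/6) ‖x₁‖`, then the deep hole lattice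
`span_ℤ {x₁, z}` is well-rounded: `‖z‖ = ‖x₁ - z‖` and every nonzero lattice vector has
norm at least `‖z‖`. -/
theorem deep_hole_lattice_wellRounded_of_alpha_le
    (x₁ x₂ z : EuclideanSpace ℝ (Fin 2))
    (hind : LinearIndependent ℝ ![x₁, x₂])
    (hx₁ : 0 < ‖x₁‖) (hle : ‖x₁‖ ≤ ‖x₂‖)
    (θ : ℝ) (hθ₁ : Real.pi / 3 ≤ θ) (hθ₂ : θ ≤ Real.pi / 2)
    (hcos : Real.cos θ = ⟪x₁, x₂⟫ / (‖x₁‖ * ‖x₂‖))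
    (hz₁ : ‖z‖ = ‖z - x₁‖) (hz₂ : ‖z‖ = ‖z - x₂‖)
    (hbound : ‖x₂‖ ≤ 2 * Real.sin (θ + Real.pi / 6) * ‖x₁‖) :
    ‖z‖ = ‖x₁ - z‖ ∧
      ∀ v ∈ Submodule.span ℤ ({x₁, z} : Set (EuclideanSpace ℝ (Fin 2))),
        v ≠ 0 → ‖z‖ ≤ ‖v‖ := by
  have pi_pos := Real.pi_pos
  set a := ‖x₁‖ with ha_def
  set b := ‖x₂‖ with hb_def
  set r := ‖z‖ with hr_def
  have hb : 0 < b := lt_of_lt_of_le hx₁ hle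
  have hr0 : (0:ℝ) ≤ r := norm_nonneg z
  set s := Real.sin θ with hs_def
  set c := Real.cos θ with hc_def
  clear_value a b r s c
  -- basic trig facts
  have hs2 : s^2 = 1 - c^2 := by
    rw [hs_def, hc_def]
    linarith [Real.sin_sq_add_cos_sq θ]
  have hc_le : c ≤ 1/2 := by
    rw [hc_def]
    have : Real.cos θ ≤ Real.cos (Real.pi/3) := by
      apply Real.cos_le_cos_of_nonneg_of_le_pi (by positivity) (by linarith) hθ₁
    rwa [Real.cos_pi_div_three] at this
  have hc_nonneg : 0 ≤ c := by
    rw [hc_def]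
    apply Real.cos_nonneg_of_mem_Icc
    constructor <;> [linarith; linarith]
  have hs_pos : 0 < s := by
    rw [hs_def]
    apply Real.sin_pos_of_pos_of_lt_pi <;> linarith
  -- inner products with z
  have hzx₁ : ⟪z, x₁⟫ = a^2/2 := by
    have h1 : ‖z - x₁‖^2 = ‖z‖^2 - 2*⟪z,x₁⟫ + ‖x₁‖^2 := norm_sub_sq_real z x₁
    have h2 : ‖z‖^2 = ‖z - x₁‖^2 := by rw [← hr_def, hz₁]
    rw [ha_def]
    linarith [h1, h2]
  have hzx₂ : ⟪z, x₂⟫ = b^2/2 := by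
    have h1 : ‖z - x₂‖^2 = ‖z‖^2 - 2*⟪z,x₂⟫ + ‖x₂‖^2 := norm_sub_sq_real z x₂
    have h2 : ‖z‖^2 = ‖z - x₂‖^2 := by rw [← hr_def, hz₂]
    rw [hb_def]
    linarith [h1, h2]
  have hab0 : a * b ≠ 0 := by positivity
  have hp : ⟪x₁, x₂⟫ = a*b*c := by
    rw [hcos]
    field_simp
  -- decompose z in the basis x₁, x₂
  obtain ⟨u, w, huw⟩ : ∃ u w : ℝ, z = u • x₁ + w • x₂ := by
    have hcard : Fintype.card (Fin 2) = Module.finrank ℝ (EuclideanSpace ℝ (Fin 2)) := by simp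
    let B := basisOfLinearIndependentOfCardEqFinrank hind hcard
    have hB : ∀ i, B i = ![x₁, x₂] i := fun i => by
      simp [B, coe_basisOfLinearIndependentOfCardEqFinrank]
    refine ⟨B.repr z 0, B.repr z 1, ?_⟩
    have := B.sum_repr z
    rw [Fin.sum_univ_two] at this
    rw [hB 0, hB 1] at this
    simpa using this.symm
  have hx₁sq : ⟪x₁, x₁⟫ = a^2 := by rw [ha_def]; exact real_inner_self_eq_norm_sq x₁
  have hx₂sq : ⟪x₂, x₂⟫ = b^2 := by rw [hb_def]; exact real_inner_self_eq_norm_sq x₂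
  have e1 : u * a^2 + w * (a*b*c) = a^2/2 := by
    have : ⟪z, x₁⟫ = u * ⟪x₁, x₁⟫ + w * ⟪x₂, x₁⟫ := by
      rw [huw, inner_add_left, real_inner_smul_left, real_inner_smul_left]
    rw [hzx₁, hx₁sq, real_inner_comm, hp] at this
    linarith
  have e2 : u * (a*b*c) + w * b^2 = b^2/2 := by
    have : ⟪z, x₂⟫ = u * ⟪x₁, x₂⟫ + w * ⟪x₂, x₂⟫ := by
      rw [huw, inner_add_left, real_inner_smul_left, real_inner_smul_left]
    rw [hzx₂, hx₂sq, hp] at this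
    linarith
  have e3 : r^2 = u * a^2/2 + w * b^2/2 := by
    have h := congrArg (fun y => ⟪z, y⟫) huw
    simp only [inner_add_right, real_inner_smul_right] at h
    rw [real_inner_self_eq_norm_sq, hzx₁, hzx₂] at h
    rw [hr_def]
    rw [h]; ring
  -- key identity: 4 r² s² = a² + b² - 2 a b c
  have hkey0 : 4 * r^2 * (a^2*b^2 - (a*b*c)^2) = a^2*b^2*(a^2+b^2-2*(a*b*c)) := by
    linear_combination (2*a^2*b^2 - 2*b^2*(a*b*c)) * e1 + (2*a^2*b^2 - 2*a^2*(a*b*c)) * e2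
      + (4*(a^2*b^2 - (a*b*c)^2)) * e3
  have hkey : 4 * r^2 * s^2 = a^2 + b^2 - 2*(a*b*c) := by
    have hab : (a^2*b^2 : ℝ) ≠ 0 := by positivity
    apply mul_left_cancel₀ hab
    calc a^2*b^2 * (4*r^2*s^2) = 4 * r^2 * (a^2*b^2 - (a*b*c)^2) := by
          rw [hs2]; ring
      _ = a^2*b^2*(a^2+b^2-2*(a*b*c)) := hkey0
  -- bound on b
  have hsin : Real.sin (θ + Real.pi/6) = s * (Real.sqrt 3 / 2) + c * (1/2) := by
    rw [hs_def, hc_def, Real.sin_add, Real.cos_pi_div_six, Real.sin_pi_div_six]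
  have hsqrt3 : Real.sqrt 3 ^ 2 = 3 := Real.sq_sqrt (by norm_num)
  have hsqrt3' : (0:ℝ) ≤ Real.sqrt 3 := Real.sqrt_nonneg 3
  have hbB : b ≤ (Real.sqrt 3 * s + c) * a := by
    rw [hsin] at hbound
    have : 2 * (s * (Real.sqrt 3 / 2) + c * (1/2)) * a = (Real.sqrt 3 * s + c) * a := by ring
    linarith
  obtain ⟨hra, h3r⟩ := aux_bounds a b r s c (Real.sqrt 3) hx₁ hle hs_pos hc_nonneg hc_le
    hs2 hsqrt3 hsqrt3' hbB hkey
  refine ⟨hz₁.trans (norm_sub_rev z x₁), ?_⟩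
  intro v hv hv0
  obtain ⟨m, n, hmn⟩ := Submodule.mem_span_pair.mp hv
  have hmn' : ((m:ℝ)) • x₁ + ((n:ℝ)) • z = v := by
    rw [Int.cast_smul_eq_zsmul, Int.cast_smul_eq_zsmul]; exact hmn
  have hvsq : ‖v‖^2 = (m:ℝ)^2*a^2 + (m:ℝ)*(n:ℝ)*a^2 + (n:ℝ)^2*r^2 := by
    have h0 : ‖v‖^2 = ⟪v, v⟫ := (real_inner_self_eq_norm_sq v).symm
    rw [h0, ← hmn']
    rw [inner_add_left, inner_add_right, inner_add_right]
    simp only [real_inner_smul_left, real_inner_smul_right]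
    rw [hx₁sq, real_inner_self_eq_norm_sq z, ← hr_def, real_inner_comm z x₁, hzx₁]
    ring
  have hmn0 : ¬(m = 0 ∧ n = 0) := by
    rintro ⟨rfl, rfl⟩
    apply hv0
    rw [← hmn]
    simp
  have hcase := aux_int_case m n hmn0
  have hcase' : ((n:ℝ) = 0 ∧ 1 ≤ (m:ℝ)^2) ∨
      (0 ≤ (m:ℝ)*((m:ℝ)+(n:ℝ)) ∧ (n:ℝ)^2 = 1) ∨ 4 ≤ (n:ℝ)^2 := by
    rcases hcase with ⟨h1, h2⟩|⟨h1, h2⟩|h1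
    · exact Or.inl ⟨by exact_mod_cast h1, by exact_mod_cast h2⟩
    · refine Or.inr (Or.inl ⟨?_, by exact_mod_cast h2⟩)
      have := h1
      push_cast
      exact_mod_cast this
    · exact Or.inr (Or.inr (by exact_mod_cast h1))
  have hvr : r^2 ≤ ‖v‖^2 := by
    rw [hvsq]
    exact aux_min a r (m:ℝ) (n:ℝ) hx₁ hr0 hra h3r hcase'
  exact aux_sqle r ‖v‖ hr0 (norm_nonneg v) hvr
end

section
/- Let x₁, x₂ ∈ ℝ² be linearly independent vectors with 0 < ‖x₁‖ ≤ ‖x₂‖, whose angle θ satisfies π/3 ≤ θ ≤ π/2, and let z ∈ ℝ² be the fundamental deep hole, i.e. the unique point with ‖z‖ = ‖z − x₁‖ = ‖z − x₂‖. If the lattice L = span_ℤ{x₁, x₂} is semi-stable, i.e. ‖x₁‖⁴ ≥ ‖x₁‖²·‖x₂‖² − ⟨x₁,x₂⟩² (equivalently ‖x₁‖² ≥ det(L)), then the deep hole lattice H(L) = span_ℤ{x₁, z} is well-rounded; more precisely, ‖z‖ = ‖x₁ − z‖ and every nonzero v ∈ span_ℤ{x₁, z} satisfies ‖v‖ ≥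 ‖z‖. -/
open scoped RealInnerProductSpace


private lemma aux_bounds_s1 (a b c Z : ℝ) (hx₁ : 0 < a) (hb : 0 < b) (hle : a ≤ b)
    (hc0 : 0 ≤ c) (hc2 : 2 * c ≤ a * b)
    (hss : a ^ 2 * b ^ 2 - c ^ 2 ≤ a ^ 4)
    (hZformula : 4 * (a ^ 2 * b ^ 2 - c ^ 2) * Z
      = a ^ 2 * b ^ 2 * (a ^ 2 + b ^ 2 - 2 * c)) :
    Z ≤ a ^ 2 ∧ a ^ 2 ≤ 3 * Z := by
  have h4c : 4 * c ^ 2 ≤ a ^ 2 * b ^ 2 := by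
    have := mul_le_mul hc2 hc2 (by linarith) (by positivity)
    nlinarith
  have hD : (0:ℝ) < a ^ 2 * b ^ 2 - c ^ 2 := by nlinarith [mul_pos hx₁ hb]
  have hb2c : (0:ℝ) ≤ b ^ 2 - 2 * c := by
    nlinarith [mul_le_mul_of_nonneg_right hle hb.le]
  have h4 : 3 * b ^ 2 ≤ 4 * a ^ 2 := by
    nlinarith [mul_pos hx₁ hx₁, h4c, hss]
  constructor
  · have hQ : (0:ℝ) ≤ 3 * a ^ 2 * b ^ 2 - b ^ 4 + 2 * b ^ 2 * c - 4 * c ^ 2 := by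
      nlinarith [mul_le_mul_of_nonneg_right h4 (sq_nonneg b), h4c,
        mul_nonneg hc0 (sq_nonneg b)]
    have h2 : Z * (4 * (a ^ 2 * b ^ 2 - c ^ 2)) ≤ a ^ 2 * (4 * (a ^ 2 * b ^ 2 - c ^ 2)) := by
      nlinarith [hZformula, mul_nonneg (sq_nonneg a) hQ]
    exact le_of_mul_le_mul_right h2 (by linarith)
  · have h1 : (0:ℝ) ≤ a ^ 2 * ((b ^ 2 - c) * (b ^ 2 - 2 * c)) :=
      mul_nonneg (sq_nonneg a) (mul_nonneg (by nlinarith) hb2c)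
    have h2 : (0:ℝ) ≤ a ^ 2 * ((b ^ 2 - a ^ 2) * b ^ 2) :=
      mul_nonneg (sq_nonneg a) (mul_nonneg (by nlinarith) (sq_nonneg b))
    have hkey : a ^ 2 * (4 * (a ^ 2 * b ^ 2 - c ^ 2))
        ≤ (3 * Z) * (4 * (a ^ 2 * b ^ 2 - c ^ 2)) := by
      nlinarith [hZformula, h1, h2]
    exact le_of_mul_le_mul_right hkey (by linarith)

private lemma aux_quad (a Z : ℝ) (ha : 0 < a) (hZle : Z ≤ a ^ 2) (hZge : a ^ 2 ≤ 3 * Z)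
    (m n : ℤ) (hmn : ¬ (m = 0 ∧ n = 0)) :
    Z ≤ (m:ℝ) ^ 2 * a ^ 2 + (m:ℝ) * (n:ℝ) * a ^ 2 + (n:ℝ) ^ 2 * Z := by
  rcases eq_or_ne n 0 with hn | hn
  · subst hn
    have hm : m ≠ 0 := by tauto
    have hm1 : (1:ℝ) ≤ (m:ℝ) ^ 2 := by
      have : (1:ℤ) ≤ m ^ 2 := by
        rcases lt_or_gt_of_ne hm with h | h <;> nlinarith
      exact_mod_cast this
    push_cast
    nlinarith
  · rcases eq_or_ne (n ^ 2) 1 with hn1 | hn1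
    · have hn11 : n = 1 ∨ n = -1 := by
        have h' : (n - 1) * (n + 1) = 0 := by nlinarith
        rcases mul_eq_zero.mp h' with h | h
        · left; omega
        · right; omega
      have hmm : (0:ℤ) ≤ m ^ 2 + m * n := by
        rcases hn11 with h | h <;> subst h
        · rcases le_or_gt 0 m with h | h
          · nlinarith
          · nlinarith
        · rcases le_or_gt m 0 with h | h
          · nlinarith
          · nlinarith
      have hmm' : (0:ℝ) ≤ (m:ℝ) ^ 2 + (m:ℝ) * (n:ℝ) := by exact_mod_cast hmm
      have hn1' : ((n:ℝ)) ^ 2 = 1 := by exact_mod_cast hn1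
      nlinarith [sq_nonneg a]
    · have hn4 : (4:ℤ) ≤ n ^ 2 := by
        rcases lt_or_ge n 0 with h | h
        · have h1 : n ≠ -1 := by rintro rfl; exact hn1 (by ring)
          have : n ≤ -2 := by omega
          nlinarith
        · have h1 : n ≠ 1 := by rintro rfl; exact hn1 (by ring)
          have : 2 ≤ n := by omega
          nlinarith
      have hn4' : (4:ℝ) ≤ (n:ℝ) ^ 2 := by exact_mod_cast hn4
      nlinarith [sq_nonneg (2 * (m:ℝ) + (n:ℝ)),
        mul_nonneg (show (0:ℝ) ≤ (n:ℝ) ^ 2 - 4 by linarith)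
          (show (0:ℝ) ≤ 3 * Z - a ^ 2 by linarith)]

/-- If `x₁, x₂` are linearly independent with `0 < ‖x₁‖ ≤ ‖x₂‖`, the angle `θ`
between them lies in `[π/3, π/2]`, `z` is the fundamental deep hole, and the lattice
`span_ℤ {x₁, x₂}` is semi-stable, i.e. `‖x₁‖⁴ ≥ ‖x₁‖²‖x₂‖² - ⟪x₁,x₂⟫²` (equivalently
`‖x₁‖² ≥ det L`), then the deep hole lattice `span_ℤ {x₁, z}` is well-rounded. -/
theorem deep_hole_lattice_wellRounded_of_semistable
    (x₁ x₂ z : EuclideanSpace ℝ (Fin 2))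
    (hind : LinearIndependent ℝ ![x₁, x₂])
    (hx₁ : 0 < ‖x₁‖) (hle : ‖x₁‖ ≤ ‖x₂‖)
    (θ : ℝ) (hθ₁ : Real.pi / 3 ≤ θ) (hθ₂ : θ ≤ Real.pi / 2)
    (hcos : Real.cos θ = ⟪x₁, x₂⟫ / (‖x₁‖ * ‖x₂‖))
    (hz₁ : ‖z‖ = ‖z - x₁‖) (hz₂ : ‖z‖ = ‖z - x₂‖)
    (hss : ‖x₁‖ ^ 2 * ‖x₂‖ ^ 2 - ⟪x₁, x₂⟫ ^ 2 ≤ ‖x₁‖ ^ 4) :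
    ‖z‖ = ‖x₁ - z‖ ∧
      ∀ v ∈ Submodule.span ℤ ({x₁, z} : Set (EuclideanSpace ℝ (Fin 2))),
        v ≠ 0 → ‖z‖ ≤ ‖v‖ := by
  have hb : 0 < ‖x₂‖ := lt_of_lt_of_le hx₁ hle
  set a : ℝ := ‖x₁‖ with ha
  set b : ℝ := ‖x₂‖ with hbdef
  set c : ℝ := ⟪x₁, x₂⟫ with hc
  -- bounds on c
  have hcos0 : 0 ≤ Real.cos θ :=
    Real.cos_nonneg_of_mem_Icc ⟨by linarith [Real.pi_pos], hθ₂⟩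
  have hcoshalf : Real.cos θ ≤ 1 / 2 := by
    have h := Real.cos_le_cos_of_nonneg_of_le_pi
      (by positivity) (by linarith [Real.pi_pos]) hθ₁
    rwa [Real.cos_pi_div_three] at h
  have hceq : c = Real.cos θ * (a * b) := by
    rw [hcos]
    field_simp
  have hc0 : 0 ≤ c := by rw [hceq]; positivity
  have hc2 : 2 * c ≤ a * b := by
    rw [hceq]; nlinarith [mul_pos hx₁ hb]
  -- inner products with z
  have hiz1 : ⟪x₁, z⟫ = a ^ 2 / 2 := by
    have h : ‖z‖ ^ 2 = ‖z - x₁‖ ^ 2 := by rw [hz₁]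
    rw [norm_sub_sq_real] at h
    rw [real_inner_comm]
    linarith
  have hiz2 : ⟪x₂, z⟫ = b ^ 2 / 2 := by
    have h : ‖z‖ ^ 2 = ‖z - x₂‖ ^ 2 := by rw [hz₂]
    rw [norm_sub_sq_real] at h
    rw [real_inner_comm]
    linarith
  -- z is in the real span of x₁, x₂
  have hspan : Submodule.span ℝ (Set.range ![x₁, x₂]) = ⊤ :=
    hind.span_eq_top_of_card_eq_finrank (by simp)
  have hrange : Set.range ![x₁, x₂] = {x₁, x₂} := by
    simp [Matrix.range_cons, Matrix.range_empty, Set.pair_comm]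
  have hzmem : z ∈ Submodule.span ℝ ({x₁, x₂} : Set (EuclideanSpace ℝ (Fin 2))) := by
    rw [← hrange, hspan]; trivial
  obtain ⟨α, β, hαβ⟩ := Submodule.mem_span_pair.mp hzmem
  -- scalar equations from the coordinates of z
  have e1 : α * a ^ 2 + β * c = a ^ 2 / 2 := by
    have := hiz1
    rw [← hαβ, inner_add_right, real_inner_smul_right, real_inner_smul_right,
      real_inner_self_eq_norm_sq] at this
    linarith
  have hc' : ⟪x₂, x₁⟫ = c := (real_inner_comm x₂ x₁).symm
  have e2 : α * c + β * b ^ 2 = b ^ 2 / 2 := by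
    have := hiz2
    rw [← hαβ, inner_add_right, real_inner_smul_right, real_inner_smul_right,
      real_inner_self_eq_norm_sq, hc'] at this
    linarith
  set Z : ℝ := ‖z‖ ^ 2 with hZ
  have eZ : Z = α * (a ^ 2 / 2) + β * (b ^ 2 / 2) := by
    rw [hZ, ← real_inner_self_eq_norm_sq]
    nth_rewrite 1 [← hαβ]
    rw [inner_add_left, real_inner_smul_left, real_inner_smul_left, hiz1, hiz2]
  have hZformula : 4 * (a ^ 2 * b ^ 2 - c ^ 2) * Z
      = a ^ 2 * b ^ 2 * (a ^ 2 + b ^ 2 - 2 * c) := by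
    have hα : α * (a ^ 2 * b ^ 2 - c ^ 2) = b ^ 2 * (a ^ 2 - c) / 2 := by
      linear_combination b ^ 2 * e1 - c * e2
    have hβ : β * (a ^ 2 * b ^ 2 - c ^ 2) = a ^ 2 * (b ^ 2 - c) / 2 := by
      linear_combination a ^ 2 * e2 - c * e1
    linear_combination 2 * a ^ 2 * hα + 2 * b ^ 2 * hβ
      + 4 * (a ^ 2 * b ^ 2 - c ^ 2) * eZ
  obtain ⟨hZle, hZge⟩ := aux_bounds_s1 a b c Z hx₁ hb hle hc0 hc2 hss hZformula
  constructor
  · rw [hz₁, norm_sub_rev]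
  · intro v hv hvne
    obtain ⟨m, n, hmn⟩ := Submodule.mem_span_pair.mp hv
    have hmn' : ((m : ℝ)) • x₁ + ((n : ℝ)) • z = v := by
      rw [Int.cast_smul_eq_zsmul, Int.cast_smul_eq_zsmul]; exact hmn
    have hnormv : ‖v‖ ^ 2 = (m:ℝ) ^ 2 * a ^ 2 + (m:ℝ) * (n:ℝ) * a ^ 2 + (n:ℝ) ^ 2 * Z := by
      rw [← hmn', norm_add_sq_real, norm_smul, norm_smul, real_inner_smul_left,
        real_inner_smul_right, hiz1]
      simp only [Real.norm_eq_abs]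
      rw [mul_pow, mul_pow, sq_abs, sq_abs]
      ring
    have hmn0 : ¬ (m = 0 ∧ n = 0) := by
      rintro ⟨rfl, rfl⟩
      simp at hmn
      exact hvne hmn.symm
    have key : Z ≤ ‖v‖ ^ 2 := by
      rw [hnormv]
      exact aux_quad a Z hx₁ hZle hZge m n hmn0
    exact (pow_le_pow_iff_left₀ (norm_nonneg z) (norm_nonneg v) two_ne_zero).mp key
end

section
/- Let x₁, x₂ ∈ ℝ² be linearly independent vectors with ‖x₁‖ = ‖x₂‖ > 0, whose angle θ (so cos θ = ⟨x₁,x₂⟩/(‖x₁‖·‖x₂‖)) satisfies π/3 ≤ θ ≤ π/2, and let z ∈ ℝ² be the fundamental deep hole, i.e. the unique point with ‖z‖ = ‖z − x₁‖ = ‖z − x₂‖. Then ‖z‖ = ‖x₁ − z‖ > 0, the angle between z and x₁ − z equals θ (that is, ⟨z, x₁ − z⟩ = ‖z‖·‖x₁ − z‖·cos θ), and consequently the deep hole lattice H(L) = span_ℤ{x₁, z} is similar to L = span_ℤ{x₁, x₂}: there exist a real number α > 0 and a linear isometry U of ℝ² such that span_ℤ{x₁, z} = {α·U(v) : v ∈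 span_ℤ{x₁, x₂}}. -/
open scoped RealInnerProductSpace

set_option maxHeartbeats 1600000

/-- If `x₁, x₂` are linearly independent with `‖x₁‖ = ‖x₂‖ > 0` and angle
`θ ∈ [π/3, π/2]`, and `z` is the fundamental deep hole, then `‖z‖ = ‖x₁ - z‖ > 0`, the angle
between `z` and `x₁ - z` is `θ`, and the deep hole lattice `span_ℤ {x₁, z}` is similar to
`span_ℤ {x₁, x₂}`. -/
theorem deep_hole_lattice_similar_of_wellRounded
    (x₁ x₂ z : EuclideanSpace ℝ (Fin 2))
    (hind : LinearIndependent ℝ ![x₁, x₂])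
    (hx₁ : 0 < ‖x₁‖) (heq : ‖x₁‖ = ‖x₂‖)
    (θ : ℝ) (hθ₁ : Real.pi / 3 ≤ θ) (hθ₂ : θ ≤ Real.pi / 2)
    (hcos : Real.cos θ = ⟪x₁, x₂⟫ / (‖x₁‖ * ‖x₂‖))
    (hz₁ : ‖z‖ = ‖z - x₁‖) (hz₂ : ‖z‖ = ‖z - x₂‖) :
    ‖z‖ = ‖x₁ - z‖ ∧ 0 < ‖z‖ ∧
      ⟪z, x₁ - z⟫ = ‖z‖ * ‖x₁ - z‖ * Real.cos θ ∧
      ∃ α : ℝ, 0 < α ∧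
        ∃ U : EuclideanSpace ℝ (Fin 2) ≃ₗᵢ[ℝ] EuclideanSpace ℝ (Fin 2),
          (Submodule.span ℤ ({x₁, z} : Set (EuclideanSpace ℝ (Fin 2))) : Set (EuclideanSpace ℝ (Fin 2))) =
            (fun v => α • U v) '' (Submodule.span ℤ ({x₁, x₂} : Set (EuclideanSpace ℝ (Fin 2)))) := by
  set r := ‖x₁‖ with hr
  set c := ⟪x₁, x₂⟫ with hcdef
  clear_value r c
  have hrpos : (0:ℝ) < r := hx₁
  have hrne : r ≠ 0 := ne_of_gt hrpos
  have hπ : (0:ℝ) < Real.pi := Real.pi_pos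
  have hcosθ0 : 0 ≤ Real.cos θ := by
    apply Real.cos_nonneg_of_mem_Icc
    constructor
    · nlinarith
    · exact hθ₂
  have hcosθ2 : Real.cos θ ≤ 1/2 := by
    have := Real.cos_le_cos_of_nonneg_of_le_pi (by positivity) (by linarith) hθ₁
    rwa [Real.cos_pi_div_three] at this
  have hcval : c = r^2 * Real.cos θ := by
    rw [hcos, ← heq]
    field_simp [← hcdef]
  have hc0 : 0 ≤ c := by nlinarith
  have hc2 : 2 * c ≤ r^2 := by nlinarith
  have hden : 0 < r^2 + c := by nlinarith
  -- inner products with z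
  have ip1 : ⟪z, x₁⟫ = r^2 / 2 := by
    have h : ‖z‖^2 = ‖z - x₁‖^2 := by rw [hz₁]
    rw [@norm_sub_sq_real, ← hr] at h
    linarith
  have ip2 : ⟪z, x₂⟫ = r^2 / 2 := by
    have h : ‖z‖^2 = ‖z - x₂‖^2 := by rw [hz₂]
    rw [@norm_sub_sq_real, ← heq] at h
    linarith
  -- span of x₁, x₂ is everything
  have hspan : Submodule.span ℝ ({x₁, x₂} : Set (EuclideanSpace ℝ (Fin 2))) = ⊤ := by
    have h := hind.span_eq_top_of_card_eq_finrank (by simp)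
    have hrange : Set.range ![x₁, x₂] = ({x₁, x₂} : Set (EuclideanSpace ℝ (Fin 2))) := by
      ext v
      simp [Matrix.range_cons, Matrix.range_empty]
      tauto
    rwa [hrange] at h
  have hmem : ∀ v : EuclideanSpace ℝ (Fin 2), ∃ a b : ℝ, a • x₁ + b • x₂ = v := by
    intro v
    have : v ∈ Submodule.span ℝ ({x₁, x₂} : Set (EuclideanSpace ℝ (Fin 2))) := by
      rw [hspan]; trivial
    exact Submodule.mem_span_pair.mp this
  set t : ℝ := r^2 / (2 * (r^2 + c)) with htdef
  clear_value t
  have htpos : 0 < t := by rw [htdef]; positivity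
  have htval : t * (r^2 + c) = r^2 / 2 := by
    rw [htdef]
    field_simp
  have hx1sq : ⟪x₁, x₁⟫ = r^2 := by
    rw [real_inner_self_eq_norm_sq, ← hr]
  have hx2sq : ⟪x₂, x₂⟫ = r^2 := by
    rw [real_inner_self_eq_norm_sq, ← heq]
  have hcomm : ⟪x₂, x₁⟫ = c := by rw [hcdef]; exact real_inner_comm x₁ x₂
  -- z = t • x₁ + t • x₂
  have hzrep : z = t • x₁ + t • x₂ := by
    set w : EuclideanSpace ℝ (Fin 2) := z - (t • x₁ + t • x₂) with hwdef
    clear_value w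
    have hw1 : ⟪w, x₁⟫ = 0 := by
      rw [hwdef, inner_sub_left, inner_add_left, real_inner_smul_left, real_inner_smul_left,
        ip1, hx1sq, hcomm]
      nlinarith [htval]
    have hw2 : ⟪w, x₂⟫ = 0 := by
      rw [hwdef, inner_sub_left, inner_add_left, real_inner_smul_left, real_inner_smul_left,
        ip2, hx2sq, ← hcdef]
      nlinarith [htval]
    obtain ⟨a, b, hab⟩ := hmem w
    have hww : ⟪w, w⟫ = 0 := by
      calc ⟪w, w⟫ = ⟪w, a • x₁ + b • x₂⟫ := by rw [hab]
        _ = a * ⟪w, x₁⟫ + b * ⟪w, x₂⟫ := by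
            rw [inner_add_right, real_inner_smul_right, real_inner_smul_right]
        _ = 0 := by rw [hw1, hw2]; ring
    have hw0 : w = 0 := by rwa [inner_self_eq_zero] at hww
    rw [hwdef] at hw0
    exact sub_eq_zero.mp hw0
  have hzz : ⟪z, z⟫ = t * r^2 := by
    calc ⟪z, z⟫ = ⟪z, t • x₁ + t • x₂⟫ := by rw [← hzrep]
      _ = t * ⟪z, x₁⟫ + t * ⟪z, x₂⟫ := by
          rw [inner_add_right, real_inner_smul_right, real_inner_smul_right]
      _ = t * r^2 := by rw [ip1, ip2]; ring
  have hnormsq : ‖z‖^2 = t * r^2 := by rw [← real_inner_self_eq_norm_sq]; exact hzz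
  have hzpos : 0 < ‖z‖ := by
    rcases (norm_nonneg z).lt_or_eq with h | h
    · exact h
    · exfalso; nlinarith [hnormsq]
  have part1 : ‖z‖ = ‖x₁ - z‖ := by rw [hz₁, norm_sub_rev]
  have hip : ⟪z, x₁ - z⟫ = t * c := by
    rw [inner_sub_right, ip1, hzz]
    nlinarith [htval]
  have part3 : ⟪z, x₁ - z⟫ = ‖z‖ * ‖x₁ - z‖ * Real.cos θ := by
    rw [hip, ← part1, ← sq, hnormsq, hcval]
    ring
  refine ⟨part1, hzpos, part3, ?_⟩
  -- the similarity
  set α : ℝ := ‖z‖ / r with hαdef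
  clear_value α
  have hαpos : 0 < α := by rw [hαdef]; positivity
  have hαne : α ≠ 0 := ne_of_gt hαpos
  have hα2 : α^2 = t := by
    rw [hαdef, div_pow, hnormsq]
    field_simp
  set v₁ : EuclideanSpace ℝ (Fin 2) := α⁻¹ • z with hv₁
  set v₂ : EuclideanSpace ℝ (Fin 2) := α⁻¹ • (x₁ - z) with hv₂
  clear_value v₁ v₂
  have hx1zsq : ⟪x₁ - z, x₁ - z⟫ = t * r^2 := by
    rw [real_inner_self_eq_norm_sq, ← part1]
    exact hnormsq
  have g11 : ⟪v₁, v₁⟫ = ⟪x₁, x₁⟫ := by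
    rw [hv₁, real_inner_smul_left, real_inner_smul_right, hzz, hx1sq, ← hα2]
    field_simp
  have g22 : ⟪v₂, v₂⟫ = ⟪x₂, x₂⟫ := by
    rw [hv₂, real_inner_smul_left, real_inner_smul_right, hx1zsq, hx2sq, ← hα2]
    field_simp
  have g12 : ⟪v₁, v₂⟫ = ⟪x₁, x₂⟫ := by
    rw [hv₁, hv₂, real_inner_smul_left, real_inner_smul_right, hip, ← hcdef, ← hα2]
    field_simp
  have g21 : ⟪v₂, v₁⟫ = ⟪x₂, x₁⟫ := by
    rw [real_inner_comm v₁ v₂, real_inner_comm x₁ x₂]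
    exact g12
  -- construct the isometry
  have hcard : Fintype.card (Fin 2) = Module.finrank ℝ (EuclideanSpace ℝ (Fin 2)) := by
    rw [finrank_euclideanSpace_fin]
    rfl
  set B := basisOfLinearIndependentOfCardEqFinrank hind hcard with hBdef
  have hB : ⇑B = ![x₁, x₂] := coe_basisOfLinearIndependentOfCardEqFinrank hind hcard
  set f : EuclideanSpace ℝ (Fin 2) →ₗ[ℝ] EuclideanSpace ℝ (Fin 2) := B.constr ℝ ![v₁, v₂]
    with hfdef
  have hB0 : B 0 = x₁ := by rw [show (B 0 : EuclideanSpace ℝ (Fin 2)) = ![x₁,x₂] 0 from by rw [hB]]; rfl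
  have hB1 : B 1 = x₂ := by rw [show (B 1 : EuclideanSpace ℝ (Fin 2)) = ![x₁,x₂] 1 from by rw [hB]]; rfl
  have hf1 : f x₁ = v₁ := by
    rw [hfdef, ← hB0, Module.Basis.constr_basis]
    rfl
  have hf2 : f x₂ = v₂ := by
    rw [hfdef, ← hB1, Module.Basis.constr_basis]
    rfl
  have hinner : ∀ u v : EuclideanSpace ℝ (Fin 2), ⟪f u, f v⟫ = ⟪u, v⟫ := by
    intro u v
    obtain ⟨a, b, hu⟩ := hmem u
    obtain ⟨a', b', hv⟩ := hmem v
    rw [← hu, ← hv]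
    simp only [map_add, map_smul, hf1, hf2]
    simp only [inner_add_left, inner_add_right, real_inner_smul_left, real_inner_smul_right]
    rw [g11, g22, g12, g21]
  set fi : EuclideanSpace ℝ (Fin 2) →ₗᵢ[ℝ] EuclideanSpace ℝ (Fin 2) :=
    f.isometryOfInner hinner with hfidef
  set U : EuclideanSpace ℝ (Fin 2) ≃ₗᵢ[ℝ] EuclideanSpace ℝ (Fin 2) :=
    fi.toLinearIsometryEquiv rfl with hUdef
  have hU : ∀ v, U v = f v := by
    intro v
    rw [hUdef]
    rw [LinearIsometry.coe_toLinearIsometryEquiv]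
    rw [hfidef, LinearMap.coe_isometryOfInner]
  refine ⟨α, hαpos, U, ?_⟩
  -- the ℤ-linear map v ↦ α • U v
  set G : EuclideanSpace ℝ (Fin 2) →ₗ[ℤ] EuclideanSpace ℝ (Fin 2) :=
    (α • f).restrictScalars ℤ with hGdef
  have hGapp : ∀ v, G v = α • U v := by
    intro v
    rw [hU v, hGdef]
    simp
  have hGx1 : G x₁ = z := by
    rw [hGdef]
    simp only [LinearMap.coe_restrictScalars, LinearMap.smul_apply]
    rw [hf1, hv₁, smul_smul, mul_inv_cancel₀ hαne, one_smul]
  have hGx2 : G x₂ = x₁ - z := by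
    rw [hGdef]
    simp only [LinearMap.coe_restrictScalars, LinearMap.smul_apply]
    rw [hf2, hv₂, smul_smul, mul_inv_cancel₀ hαne, one_smul]
  have himg : (fun v => α • U v) '' (Submodule.span ℤ ({x₁, x₂} : Set (EuclideanSpace ℝ (Fin 2))))
      = (Submodule.map G (Submodule.span ℤ ({x₁, x₂} : Set (EuclideanSpace ℝ (Fin 2)))) :
        Set (EuclideanSpace ℝ (Fin 2))) := by
    rw [Submodule.map_coe]
    apply Set.image_congr
    intro v _
    rw [hGapp]
  have hspan2 : Submodule.span ℤ ({x₁, z} : Set (EuclideanSpace ℝ (Fin 2)))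
      = Submodule.span ℤ ({z, x₁ - z} : Set (EuclideanSpace ℝ (Fin 2))) := by
    apply le_antisymm
    · rw [Submodule.span_le, Set.insert_subset_iff, Set.singleton_subset_iff]
      constructor
      · have h1 : z ∈ Submodule.span ℤ ({z, x₁ - z} : Set (EuclideanSpace ℝ (Fin 2))) :=
          Submodule.subset_span (by simp)
        have h2 : x₁ - z ∈ Submodule.span ℤ ({z, x₁ - z} : Set (EuclideanSpace ℝ (Fin 2))) :=
          Submodule.subset_span (by simp)
        have h3 := Submodule.add_mem _ h1 h2
        simpa using h3
      · exact Submodule.subset_span (by simp)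
    · rw [Submodule.span_le, Set.insert_subset_iff, Set.singleton_subset_iff]
      constructor
      · exact Submodule.subset_span (by simp)
      · have h1 : x₁ ∈ Submodule.span ℤ ({x₁, z} : Set (EuclideanSpace ℝ (Fin 2))) :=
          Submodule.subset_span (by simp)
        have h2 : z ∈ Submodule.span ℤ ({x₁, z} : Set (EuclideanSpace ℝ (Fin 2))) :=
          Submodule.subset_span (by simp)
        exact Submodule.sub_mem _ h1 h2
  rw [himg, Submodule.map_span, Set.image_pair, hGx1, hGx2, hspan2]
end

section
/- Let u, v ∈ ℝ² be linearly independent vectors with ‖u‖ = ‖v‖ > 0 and 2·|⟨u, v⟩| ≤ ‖u‖² (i.e. the angle between u and v lies in [π/3, 2π/3]). Then for every pair of integers (a, b) ≠ (0, 0), ‖a·u + b·v‖ ≥ ‖u‖. In particular, u and v realize the minimal nonzero length of the lattice span_ℤ{u, v}, so span_ℤ{u, v} is well-rounded. -/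
open scoped RealInnerProductSpace

/-- If `u, v` are linearly independent vectors in `ℝ²` with `‖u‖ = ‖v‖ > 0` and
`2|⟪u,v⟫| ≤ ‖u‖²` (angle in `[π/3, 2π/3]`), then `‖au + bv‖ ≥ ‖u‖` for every pair of integers
`(a,b) ≠ (0,0)`; in particular `u, v` realize the minimal nonzero length of `span_ℤ {u, v}`,
so this lattice is well-rounded. -/
theorem wellRounded_of_equal_norms_and_angle
    (u v : EuclideanSpace ℝ (Fin 2))
    (hind : LinearIndependent ℝ ![u, v])
    (heq : ‖u‖ = ‖v‖) (hpos : 0 < ‖u‖)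
    (hip : 2 * |⟪u, v⟫| ≤ ‖u‖ ^ 2) :
    (∀ a b : ℤ, ¬(a = 0 ∧ b = 0) → ‖u‖ ≤ ‖(a : ℝ) • u + (b : ℝ) • v‖) ∧
      ∀ w ∈ Submodule.span ℤ ({u, v} : Set (EuclideanSpace ℝ (Fin 2))),
        w ≠ 0 → ‖u‖ ≤ ‖w‖ := by
  have key : ∀ a b : ℤ, ¬(a = 0 ∧ b = 0) → ‖u‖ ≤ ‖(a : ℝ) • u + (b : ℝ) • v‖ := by
    intro a b hab
    have hsq : ‖(a : ℝ) • u + (b : ℝ) • v‖ ^ 2 =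
        (a : ℝ) ^ 2 * ‖u‖ ^ 2 + 2 * ((a : ℝ) * b) * ⟪u, v⟫ + (b : ℝ) ^ 2 * ‖v‖ ^ 2 := by
      rw [norm_add_sq_real, norm_smul, norm_smul, real_inner_smul_left, real_inner_smul_right]
      simp [mul_pow]
      ring
    have hcoef : (1 : ℝ) ≤ (a : ℝ) ^ 2 + (b : ℝ) ^ 2 - |(a : ℝ) * b| := by
      have h1 : (1 : ℤ) ≤ a ^ 2 + b ^ 2 - |a * b| := by
        rcases eq_or_ne a 0 with rfl | ha
        · have hb : b ≠ 0 := fun h => hab ⟨rfl, h⟩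
          simp
          nlinarith [sq_nonneg b, Int.one_le_abs hb, sq_abs b]
        · rcases abs_cases (a * b) with ⟨h, _⟩ | ⟨h, _⟩ <;>
            nlinarith [sq_nonneg (a - b), sq_nonneg (a + b), Int.one_le_abs ha, sq_abs a]
      calc (1 : ℝ) = ((1 : ℤ) : ℝ) := by norm_num
        _ ≤ ((a ^ 2 + b ^ 2 - |a * b| : ℤ) : ℝ) := by exact_mod_cast h1
        _ = (a : ℝ) ^ 2 + (b : ℝ) ^ 2 - |(a : ℝ) * b| := by push_cast; ring
    have habs : |⟪u, v⟫| ≤ ‖u‖ ^ 2 / 2 := by linarith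
    have hinner : 2 * ((a : ℝ) * b) * ⟪u, v⟫ ≥ -(|(a : ℝ) * b| * ‖u‖ ^ 2) := by
      have h1 : ((a : ℝ) * b) * ⟪u, v⟫ ≥ -(|(a : ℝ) * b| * |⟪u, v⟫|) := by
        rw [← abs_mul]; exact neg_abs_le _
      have h2 : |(a : ℝ) * b| * |⟪u, v⟫| ≤ |(a : ℝ) * b| * (‖u‖ ^ 2 / 2) :=
        mul_le_mul_of_nonneg_left habs (abs_nonneg _)
      nlinarith
    have hge : ‖u‖ ^ 2 ≤ ‖(a : ℝ) • u + (b : ℝ) • v‖ ^ 2 := by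
      rw [hsq, ← heq]
      nlinarith [sq_nonneg (‖u‖), hpos]
    exact (pow_le_pow_iff_left₀ (norm_nonneg u) (norm_nonneg _) two_ne_zero).1 hge
  refine ⟨key, ?_⟩
  intro w hw hw0
  rw [Submodule.mem_span_pair] at hw
  obtain ⟨a, b, hab⟩ := hw
  have hw' : w = (a : ℝ) • u + (b : ℝ) • v := by
    rw [← hab, ← Int.cast_smul_eq_zsmul ℝ, ← Int.cast_smul_eq_zsmul ℝ]
  rw [hw']
  apply key
  rintro ⟨rfl, rfl⟩
  apply hw0
  rw [hw']; simp
end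

section
/- Let K be a subfield of ℝ and let τ = a + bi with a, b ∈ K, 0 ≤ a ≤ 1/2, b > 0 and a² + b² ≥ 1 (i.e. τ ∈ F). Then there exist c, d ∈ K with 0 ≤ c ≤ 1/2, d > 0 and c² + d² ≥ 1 such that the lattice Λ_γ = span_ℤ{(1,0), (c,d)} (for γ = c + di ∈ F) is similar to the deep hole lattice H(Λ_τ) = span_ℤ{(1,0), (1/2, (a² + b² − a)/(2b))}. -/
/-- The point `(a, b)` of the Euclidean plane. -/
noncomputable def vec (a b : ℝ) : EuclideanSpace ℝ (Fin 2) := WithLp.toLp 2 ![a, b]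

open Complex

noncomputable def eIso : ℂ ≃ₗᵢ[ℝ] EuclideanSpace ℝ (Fin 2) := Complex.orthonormalBasisOneI.repr

lemma eIso_apply (z : ℂ) : eIso z = vec z.re z.im := WithLp.ofLp_injective 2 (Complex.orthonormalBasisOneI_repr_apply z)

lemma image_span_pair (f : ℂ →ₗ[ℤ] ℂ) (x y : ℂ) :
    (f '' (Submodule.span ℤ ({x, y} : Set ℂ) : Set ℂ)) =
      (Submodule.span ℤ ({f x, f y} : Set ℂ) : Set ℂ) := by
  rw [← Submodule.map_coe, Submodule.map_span, Set.image_pair]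

lemma eIso_image_span_pair (x y : ℂ) :
    (eIso '' (Submodule.span ℤ ({x, y} : Set ℂ) : Set ℂ)) =
      (Submodule.span ℤ ({eIso x, eIso y} : Set (EuclideanSpace ℝ (Fin 2))) : Set _) := by
  have := Submodule.map_span ((eIso.toLinearEquiv.restrictScalars ℤ).toLinearMap)
    ({x, y} : Set ℂ)
  have h2 := congrArg (SetLike.coe) this
  rw [Submodule.map_coe] at h2
  simpa [Set.image_pair] using h2

lemma exists_rot (z : ℂ) (hz : z ≠ 0) : ∃ A : ℂ ≃ₗᵢ[ℝ] ℂ, ∀ v, ‖z‖ • A v = z * v := by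
  have hn : ‖z‖ ≠ 0 := norm_ne_zero_iff.2 hz
  have hmem : (z / ‖z‖ : ℂ) ∈ Metric.sphere (0:ℂ) 1 := by
    simp only [mem_sphere_zero_iff_norm, norm_div, Complex.norm_real, norm_norm]
    rw [div_self hn]
  refine ⟨rotation ⟨z / ‖z‖, hmem⟩, fun v => ?_⟩
  erw [rotation_apply]
  push_cast
  rw [Complex.real_smul]
  have hn' : ((‖z‖ : ℝ) : ℂ) ≠ 0 := Complex.ofReal_ne_zero.2 hn
  field_simp

lemma exists_rot_conj (z : ℂ) (hz : z ≠ 0) :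
    ∃ A : ℂ ≃ₗᵢ[ℝ] ℂ, ∀ v, ‖z‖ • A v = z * (starRingEnd ℂ) v := by
  obtain ⟨A, hA⟩ := exists_rot z hz
  exact ⟨Complex.conjLIE.trans A, fun v => by simpa using hA ((starRingEnd ℂ) v)⟩

lemma transfer (w γ : ℂ) (α : ℝ) (hα : 0 < α) (A : ℂ ≃ₗᵢ[ℝ] ℂ)
    (hspan : (Submodule.span ℤ ({1, γ} : Set ℂ) : Set ℂ)
      = (fun v => α • A v) '' (Submodule.span ℤ ({1, w} : Set ℂ) : Set ℂ)) :
    ∃ α' : ℝ, 0 < α' ∧ ∃ U : EuclideanSpace ℝ (Fin 2) ≃ₗᵢ[ℝ] EuclideanSpace ℝ (Fin 2),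
      (Submodule.span ℤ ({vec 1 0, vec γ.re γ.im} : Set (EuclideanSpace ℝ (Fin 2))) : Set _)
      = (fun u => α' • U u) ''
          (Submodule.span ℤ ({vec 1 0, vec w.re w.im} : Set (EuclideanSpace ℝ (Fin 2))) : Set _) := by
  refine ⟨α, hα, (eIso.symm.trans A).trans eIso, ?_⟩
  have h1 : vec 1 0 = eIso 1 := by rw [eIso_apply]; norm_num
  have hγ : vec γ.re γ.im = eIso γ := (eIso_apply γ).symm
  have hw : vec w.re w.im = eIso w := (eIso_apply w).symm
  rw [h1, hγ, hw, ← eIso_image_span_pair, ← eIso_image_span_pair, hspan,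
    Set.image_image, Set.image_image]
  refine Set.image_congr fun v _ => ?_
  simp [← Complex.real_smul]

lemma mem_pair_left (x y : ℂ) : x ∈ Submodule.span ℤ ({x, y} : Set ℂ) :=
  Submodule.subset_span (Set.mem_insert _ _)

lemma mem_pair_right (x y : ℂ) : y ∈ Submodule.span ℤ ({x, y} : Set ℂ) :=
  Submodule.subset_span (Set.mem_insert_of_mem _ rfl)

lemma span_pair_eq {x y u v : ℂ}
    (h1 : x ∈ Submodule.span ℤ ({u, v} : Set ℂ))
    (h2 : y ∈ Submodule.span ℤ ({u, v} : Set ℂ))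
    (h3 : u ∈ Submodule.span ℤ ({x, y} : Set ℂ))
    (h4 : v ∈ Submodule.span ℤ ({x, y} : Set ℂ)) :
    Submodule.span ℤ ({x, y} : Set ℂ) = Submodule.span ℤ ({u, v} : Set ℂ) := by
  apply le_antisymm <;>
    rw [Submodule.span_le, Set.insert_subset_iff, Set.singleton_subset_iff] <;>
    exact ⟨‹_›, ‹_›⟩

/-- Let `K` be a subfield of `ℝ` and `τ = a + bi ∈ F` with `a, b ∈ K`.
Then there is `γ = c + di ∈ F` with `c, d ∈ K` such that the lattice
`Λ_γ = span_ℤ {(1,0), (c,d)}` is similar to the deep hole lattice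
`H(Λ_τ) = span_ℤ {(1,0), (1/2, (a² + b² - a)/(2b))}`. -/
theorem deep_hole_similarity_class_over_same_field
    (K : Subfield ℝ) (a b : ℝ) (haK : a ∈ K) (hbK : b ∈ K)
    (ha0 : 0 ≤ a) (ha2 : a ≤ 1 / 2) (hb0 : 0 < b) (hab : 1 ≤ a ^ 2 + b ^ 2) :
    ∃ c d : ℝ, c ∈ K ∧ d ∈ K ∧ 0 ≤ c ∧ c ≤ 1 / 2 ∧ 0 < d ∧ 1 ≤ c ^ 2 + d ^ 2 ∧
      ∃ α : ℝ, 0 < α ∧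
        ∃ U : EuclideanSpace ℝ (Fin 2) ≃ₗᵢ[ℝ] EuclideanSpace ℝ (Fin 2),
          (Submodule.span ℤ ({vec 1 0, vec c d} : Set (EuclideanSpace ℝ (Fin 2))) :
              Set (EuclideanSpace ℝ (Fin 2))) =
            (fun w => α • U w) ''
              (Submodule.span ℤ
                ({vec 1 0, vec (1 / 2) ((a ^ 2 + b ^ 2 - a) / (2 * b))} :
                  Set (EuclideanSpace ℝ (Fin 2)))) := by
  have hb : b ≠ 0 := ne_of_gt hb0
  have h2K : (2:ℝ) ∈ K := by
    have := K.add_mem K.one_mem K.one_mem; norm_num at this ⊢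
  have h4K : (4:ℝ) ∈ K := by
    have := K.mul_mem h2K h2K; norm_num at this ⊢
  have hhalfK : (1/2 : ℝ) ∈ K := K.div_mem K.one_mem h2K
  set h : ℝ := (a ^ 2 + b ^ 2 - a) / (2 * b) with hhdef
  have hhK : h ∈ K :=
    K.div_mem (K.sub_mem (K.add_mem (pow_mem haK 2) (pow_mem hbK 2)) haK) (K.mul_mem h2K hbK)
  have hhpos : 0 < h := div_pos (by nlinarith) (by linarith)
  set m : ℝ := 1/4 + h^2 with hmdef
  have hm0 : 0 < m := by positivity
  have hmne : m ≠ 0 := ne_of_gt hm0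
  have hmK : m ∈ K := K.add_mem (K.div_mem K.one_mem h4K) (pow_mem hhK 2)
  have hm3 : 1/3 ≤ m := by
    have key : b^2 ≤ 3*(a^2+b^2-a)^2 := by
      nlinarith [sq_nonneg (a^2+b^2-1), sq_nonneg (2*a-1), sq_nonneg (a-1), sq_nonneg b,
        mul_nonneg (sub_nonneg.2 hab) (sub_nonneg.2 hab)]
    have h12 : 1/12 ≤ h^2 := by
      rw [hhdef, div_pow, le_div_iff₀ (by positivity)]
      nlinarith
    rw [hmdef]; linarith
  set w : ℂ := ((1/2 : ℝ) : ℂ) + (h : ℂ) * Complex.I with hwdef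
  have hwre : w.re = 1/2 := by simp [hwdef]
  have hwim : w.im = h := by simp [hwdef]
  have hwns : Complex.normSq w = m := by
    rw [Complex.normSq_apply, hwre, hwim, hmdef]; ring
  have hw0 : w ≠ 0 := by
    intro H
    rw [H] at hwim
    simp at hwim
    exact hhpos.ne' hwim.symm
  clear_value w m h
  rcases le_or_gt 1 m with hm1 | hm1
  · -- trivial case : already in F
    refine ⟨1/2, h, hhalfK, hhK, by norm_num, le_refl _, hhpos, by rw [hmdef] at hm1; nlinarith,
      1, one_pos, LinearIsometryEquiv.refl ℝ _, ?_⟩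
    have : (fun u : EuclideanSpace ℝ (Fin 2) =>
        (1:ℝ) • (LinearIsometryEquiv.refl ℝ (EuclideanSpace ℝ (Fin 2))) u) = id := by
      funext u; simp
    rw [this, Set.image_id]
  rcases le_or_gt (1/2) m with hm2 | hm2
  · -- case A : 1/2 ≤ m < 1, γ = 1 - 1/w
    set γ : ℂ := 1 - w⁻¹ with hγdef
    clear_value γ
    have hγre : γ.re = 1 - (1/2)/m := by
      rw [hγdef, Complex.sub_re, Complex.inv_re, hwns, hwre, Complex.one_re]
    have hγim : γ.im = h/m := by
      rw [hγdef, Complex.sub_im, Complex.inv_im, hwns, hwim, Complex.one_im, neg_div, sub_neg_eq_add,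
        zero_add]
    have hz0 : w⁻¹ ≠ 0 := inv_ne_zero hw0
    obtain ⟨A, hA⟩ := exists_rot w⁻¹ hz0
    have hαpos : 0 < ‖w⁻¹‖ := norm_pos_iff.2 hz0
    have hfun : (fun v : ℂ => ‖w⁻¹‖ • A v) = ⇑(LinearMap.mulLeft ℤ w⁻¹) := by
      funext v; rw [hA v]; rfl
    have hspan : (Submodule.span ℤ ({1, γ} : Set ℂ) : Set ℂ)
        = (fun v => ‖w⁻¹‖ • A v) '' (Submodule.span ℤ ({1, w} : Set ℂ) : Set ℂ) := by
      rw [hfun, image_span_pair]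
      have heq : Submodule.span ℤ ({1, γ} : Set ℂ) = Submodule.span ℤ
          ({(LinearMap.mulLeft ℤ w⁻¹) 1, (LinearMap.mulLeft ℤ w⁻¹) w} : Set ℂ) := by
        rw [LinearMap.mulLeft_apply, LinearMap.mulLeft_apply, mul_one, inv_mul_cancel₀ hw0]
        refine span_pair_eq (mem_pair_right _ _) ?_ ?_ (mem_pair_left _ _)
        · rw [hγdef]; exact sub_mem (mem_pair_right _ _) (mem_pair_left _ _)
        · have : w⁻¹ = 1 - γ := by rw [hγdef]; ring
          rw [this]; exact sub_mem (mem_pair_left _ _) (mem_pair_right _ _)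
      rw [heq]
    obtain ⟨α, hα', U, hU⟩ := transfer w γ _ hαpos A hspan
    rw [hwre, hwim] at hU
    refine ⟨γ.re, γ.im, ?_, ?_, ?_, ?_, ?_, ?_, α, hα', U, hU⟩
    · rw [hγre]; exact K.sub_mem K.one_mem (K.div_mem hhalfK hmK)
    · rw [hγim]; exact K.div_mem hhK hmK
    · rw [hγre, sub_nonneg, div_le_one hm0]; linarith
    · rw [hγre]
      have : 1/2 ≤ (1/2)/m := by rw [le_div_iff₀ hm0]; nlinarith
      linarith
    · rw [hγim]; positivity
    · have : γ.re^2 + γ.im^2 = 1 := by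
        rw [hγre, hγim, hmdef]
        have hne : (1/4 + h^2 : ℝ) ≠ 0 := by positivity
        field_simp
        ring
      linarith
  · -- case B : 1/3 ≤ m < 1/2, γ = conj(1/w) - ... = w/m - 1
    have hmc : ((m:ℝ):ℂ) ≠ 0 := Complex.ofReal_ne_zero.2 hmne
    set z : ℂ := w / ((m:ℝ):ℂ) with hzdef
    clear_value z
    have hz0 : z ≠ 0 := by rw [hzdef]; exact div_ne_zero hw0 hmc
    set γ : ℂ := z - 1 with hγdef
    clear_value γ
    have hγre : γ.re = (1/2)/m - 1 := by
      rw [hγdef, Complex.sub_re, hzdef, Complex.div_ofReal_re, hwre, Complex.one_re]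
    have hγim : γ.im = h/m := by
      rw [hγdef, Complex.sub_im, hzdef, Complex.div_ofReal_im, hwim, Complex.one_im, sub_zero]
    obtain ⟨A, hA⟩ := exists_rot_conj z hz0
    have hαpos : 0 < ‖z‖ := norm_pos_iff.2 hz0
    set f : ℂ →ₗ[ℤ] ℂ :=
      (LinearMap.mulLeft ℤ z).comp (starRingEnd ℂ).toAddMonoidHom.toIntLinearMap with hfdef
    have hfun : (fun v : ℂ => ‖z‖ • A v) = ⇑f := by
      funext v; rw [hA v]; rfl
    have hf1 : f 1 = z := by simp [hfdef]
    have hfw : f w = 1 := by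
      have : f w = z * (starRingEnd ℂ) w := rfl
      rw [this, hzdef, div_mul_eq_mul_div, Complex.mul_conj, hwns, div_self hmc]
    have hspan : (Submodule.span ℤ ({1, γ} : Set ℂ) : Set ℂ)
        = (fun v => ‖z‖ • A v) '' (Submodule.span ℤ ({1, w} : Set ℂ) : Set ℂ) := by
      rw [hfun, image_span_pair]
      have heq : Submodule.span ℤ ({1, γ} : Set ℂ) = Submodule.span ℤ
          ({f 1, f w} : Set ℂ) := by
        rw [hf1, hfw]
        refine span_pair_eq (mem_pair_right _ _) ?_ ?_ (mem_pair_left _ _)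
        · rw [hγdef]; exact sub_mem (mem_pair_left _ _) (mem_pair_right _ _)
        · have : z = 1 + γ := by rw [hγdef]; ring
          rw [this]; exact add_mem (mem_pair_left _ _) (mem_pair_right _ _)
      rw [heq]
    obtain ⟨α, hα', U, hU⟩ := transfer w γ _ hαpos A hspan
    rw [hwre, hwim] at hU
    refine ⟨γ.re, γ.im, ?_, ?_, ?_, ?_, ?_, ?_, α, hα', U, hU⟩
    · rw [hγre]; exact K.sub_mem (K.div_mem hhalfK hmK) K.one_mem
    · rw [hγim]; exact K.div_mem hhK hmK
    · rw [hγre, sub_nonneg, le_div_iff₀ hm0]; linarith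
    · rw [hγre]
      have : (1/2)/m ≤ 3/2 := by rw [div_le_iff₀ hm0]; nlinarith
      linarith
    · rw [hγim]; positivity
    · have : γ.re^2 + γ.im^2 = 1 := by
        rw [hγre, hγim, hmdef]
        have hne : (1/4 + h^2 : ℝ) ≠ 0 := by positivity
        field_simp
        ring
      linarith
end

section
/- Let b be a real number with 1/(2√3) ≤ b ≤ √3/2 and let τ = 1/2 + bi. Then the lattice Λ_τ = span_ℤ{(1,0), (1/2, b)} is well-rounded: the vectors (1/2, b) and (1/2, −b) are linearly independent, have equal length √(1/4 + b²), and every nonzero v ∈ Λ_τ satisfies ‖v‖ ≥ √(1/4 + b²). -/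
lemma vec_norm (a c : ℝ) : ‖vec a c‖ = Real.sqrt (a ^ 2 + c ^ 2) := by
  rw [EuclideanSpace.norm_eq]
  simp [vec, Fin.sum_univ_two, sq_abs]

lemma key (b : ℝ) (hb1 : 1/12 ≤ b^2) (hb2 : b^2 ≤ 3/4) (m n : ℤ)
    (h : ¬(m = 0 ∧ n = 0)) :
    1/4 + b^2 ≤ ((m:ℝ) + n/2)^2 + (n:ℝ)^2 * b^2 := by
  rcases eq_or_ne n 0 with hn | hn
  · subst hn
    have hm : m ≠ 0 := by tauto
    have h1 : (1:ℝ) ≤ (m:ℝ)^2 := by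
      have : 1 ≤ m^2 := by
        rcases hm.lt_or_gt with h | h <;> nlinarith
      exact_mod_cast this
    push_cast
    nlinarith
  · rcases le_or_gt 2 |n| with h2 | h2
    · have h4' : (4:ℤ) ≤ n^2 := by rcases le_abs.mp h2 with h | h <;> nlinarith
      have h4 : (4:ℝ) ≤ (n:ℝ)^2 := by exact_mod_cast h4'
      nlinarith [sq_nonneg ((m:ℝ) + n/2)]
    · have hn1 : n = 1 ∨ n = -1 := by
        have := abs_lt.mp h2; omega
      have h0 : 2*m+n ≠ 0 := by omega
      have ho : (1:ℤ) ≤ (2*m+n)^2 := by rcases h0.lt_or_gt with h | h <;> nlinarith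
      have hoR : (1:ℝ) ≤ (2*(m:ℝ)+n)^2 := by exact_mod_cast ho
      have hbn : (n:ℝ)^2 = 1 := by rcases hn1 with rfl | rfl <;> norm_num
      nlinarith [hoR, hbn]

/-- If `1/(2√3) ≤ b ≤ √3/2` and `τ = 1/2 + bi`, then the lattice
`Λ_τ = span_ℤ {(1,0), (1/2, b)}` is well-rounded: the vectors `(1/2, b)` and `(1/2, -b)` are
linearly independent members of `Λ_τ` of equal length `√(1/4 + b²)`, and every nonzero vector
of `Λ_τ` has norm at least `√(1/4 + b²)`. -/
theorem lattice_wellRounded_of_im_between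
    (b : ℝ) (hb₁ : 1 / (2 * Real.sqrt 3) ≤ b) (hb₂ : b ≤ Real.sqrt 3 / 2) :
    LinearIndependent ℝ ![vec (1 / 2) b, vec (1 / 2) (-b)] ∧
      vec (1 / 2) b ∈
        Submodule.span ℤ ({vec 1 0, vec (1 / 2) b} : Set (EuclideanSpace ℝ (Fin 2))) ∧
      vec (1 / 2) (-b) ∈
        Submodule.span ℤ ({vec 1 0, vec (1 / 2) b} : Set (EuclideanSpace ℝ (Fin 2))) ∧
      ‖vec (1 / 2) b‖ = Real.sqrt (1 / 4 + b ^ 2) ∧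
      ‖vec (1 / 2) (-b)‖ = Real.sqrt (1 / 4 + b ^ 2) ∧
      ∀ v ∈ Submodule.span ℤ ({vec 1 0, vec (1 / 2) b} : Set (EuclideanSpace ℝ (Fin 2))),
        v ≠ 0 → Real.sqrt (1 / 4 + b ^ 2) ≤ ‖v‖ := by
  have hs3 : (0:ℝ) < Real.sqrt 3 := Real.sqrt_pos.mpr (by norm_num)
  have hbpos : 0 < b := lt_of_lt_of_le (by positivity) hb₁
  have hsq : Real.sqrt 3 ^ 2 = 3 := Real.sq_sqrt (by norm_num)
  have hb1 : 1/12 ≤ b^2 := by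
    have h := pow_le_pow_left₀ (by positivity) hb₁ 2
    have he : (1 / (2 * Real.sqrt 3))^2 = 1/12 := by
      rw [div_pow, mul_pow, hsq]; norm_num
    rw [he] at h; exact h
  have hb2 : b^2 ≤ 3/4 := by nlinarith
  refine ⟨?_, ?_, ?_, ?_, ?_, ?_⟩
  · rw [LinearIndependent.pair_iff]
    intro s t hst
    have h0 := congrArg (fun x : EuclideanSpace ℝ (Fin 2) => x 0) hst
    have h1 := congrArg (fun x : EuclideanSpace ℝ (Fin 2) => x 1) hst
    simp [vec] at h0 h1
    constructor <;> nlinarith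
  · exact Submodule.subset_span (by simp)
  · have : vec (1/2) (-b) = (1:ℤ) • vec 1 0 + (-1:ℤ) • vec (1/2) b := by
      ext i
      fin_cases i <;> simp [vec] <;> ring
    rw [this]
    exact Submodule.add_mem _
      (Submodule.smul_mem _ _ (Submodule.subset_span (by simp)))
      (Submodule.smul_mem _ _ (Submodule.subset_span (by simp)))
  · rw [vec_norm]; norm_num
  · rw [vec_norm]; norm_num
  · intro v hv hv0
    rw [Submodule.mem_span_pair] at hv
    obtain ⟨m, n, rfl⟩ := hv
    have hmn : ¬(m = 0 ∧ n = 0) := by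
      rintro ⟨rfl, rfl⟩
      simp at hv0
    have hveq : (m • vec 1 0 + n • vec (1/2) b : EuclideanSpace ℝ (Fin 2))
        = vec ((m:ℝ) + n/2) ((n:ℝ) * b) := by
      ext i
      fin_cases i <;> simp [vec] <;> ring
    rw [hveq, vec_norm]
    apply Real.sqrt_le_sqrt
    have := key b hb1 hb2 m n hmn
    nlinarith
end

section
/- Let K be a subfield of ℝ and let τ₀ = a₀ + b₀·i with a₀, b₀ ∈ K, 0 ≤ a₀ ≤ 1/2, b₀ > 0 and a₀² + b₀² ≥ 1 (i.e. τ₀ ∈ F). Define the deep hole sequence τ_k = a_k + b_k·i recursively by a_k = 1/2 and b_k = (a_{k−1}² + b_{k−1}² − a_{k−1})/(2·b_{k−1}). Then there exists a positive integer n with n ≤ max{1, ⌈log₂(2b₀/√3)⌉} such that: b_k ∈ K and b_k > 0 for all 1 ≤ k ≤ n; τ_k ∈ F (i.e. 1/4 + b_k² ≥ 1) for all 1 ≤ k ≤ n − 1; |τ_n| ≤ 1 (i.e. 1/4 + b_n² ≤ 1); and the lattice Λ_{τ_n} = span_ℤ{(1,0), (1/2, b_n)} is well-rounded. -/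
section Aux

private lemma dh_norm_vec' (p q : ℝ) (v : EuclideanSpace ℝ (Fin 2)) (h : v = ![p, q]) :
    ‖v‖ = Real.sqrt (p ^ 2 + q ^ 2) := by
  rw [EuclideanSpace.norm_eq, h]
  simp [Fin.sum_univ_two, sq_abs]

private lemma dh_step (a b : ℝ) (ha0 : 0 ≤ a) (ha2 : a ≤ 1/2) (hb : 0 < b)
    (hF : 1 ≤ a ^ 2 + b ^ 2) :
    0 < (a ^ 2 + b ^ 2 - a) / (2 * b) ∧
    1 ≤ 12 * ((a ^ 2 + b ^ 2 - a) / (2 * b)) ^ 2 ∧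
    (a ^ 2 + b ^ 2 - a) / (2 * b) ≤ b / 2 := by
  have hnum : (1:ℝ)/2 ≤ a ^ 2 + b ^ 2 - a := by nlinarith
  refine ⟨by positivity, ?_, ?_⟩
  · rw [div_pow, ← mul_div_assoc, le_div_iff₀ (by positivity)]
    nlinarith [mul_nonneg (by linarith : (0:ℝ) ≤ 1/2 - a)
        (by nlinarith : (0:ℝ) ≤ 6 * (a^2+b^2) - 4*a - 2),
      mul_nonneg (by nlinarith : (0:ℝ) ≤ 3*(a^2+b^2) - 1) (by linarith : (0:ℝ) ≤ (a^2+b^2) - 1)]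
  · rw [div_le_iff₀ (by positivity)]
    nlinarith [mul_nonneg ha0 (by linarith : (0:ℝ) ≤ 1 - a)]

end Aux


/-- A rank-2 lattice (ℤ-submodule of ℝ²) is well-rounded if it contains two linearly
independent vectors of equal norm realizing the minimal nonzero length of the lattice. -/
def IsWellRounded (L : Submodule ℤ (EuclideanSpace ℝ (Fin 2))) : Prop :=
  ∃ u v : EuclideanSpace ℝ (Fin 2), u ∈ L ∧ v ∈ L ∧ LinearIndependent ℝ ![u, v] ∧
    ‖u‖ = ‖v‖ ∧ ∀ w ∈ L, w ≠ 0 → ‖u‖ ≤ ‖w‖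

private lemma dh_norm_vec (p q : ℝ) : ‖vec p q‖ = Real.sqrt (p ^ 2 + q ^ 2) :=
  dh_norm_vec' p q _ rfl

private lemma dh_wr (β : ℝ) (hβ : 0 < β) (h12 : 1 ≤ 12 * β ^ 2) (h1 : 1 / 4 + β ^ 2 ≤ 1) :
    IsWellRounded
      (Submodule.span ℤ ({vec 1 0, vec (1 / 2) β} : Set (EuclideanSpace ℝ (Fin 2)))) := by
  set L := Submodule.span ℤ ({vec 1 0, vec (1 / 2) β} : Set (EuclideanSpace ℝ (Fin 2)))
  have hsmul : ∀ (m n : ℤ), (m • vec 1 0 + n • vec (1/2) β : EuclideanSpace ℝ (Fin 2))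
      = vec ((m : ℝ) + (n : ℝ)/2) ((n : ℝ) * β) := by
    intro m n
    ext i
    fin_cases i <;> simp [vec] <;> ring
  have humem : vec (1/2) β ∈ L := Submodule.subset_span (by simp)
  have hvmem : vec (-(1/2)) β ∈ L := by
    rw [Submodule.mem_span_pair]
    exact ⟨-1, 1, by rw [hsmul]; norm_num⟩
  have hnu : ‖vec (1/2) β‖ = Real.sqrt (1/4 + β ^ 2) := by rw [dh_norm_vec]; norm_num
  have hnv : ‖vec (-(1/2)) β‖ = Real.sqrt (1/4 + β ^ 2) := by rw [dh_norm_vec]; norm_num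
  refine ⟨vec (1/2) β, vec (-(1/2)) β, humem, hvmem, ?_, by rw [hnu, hnv], ?_⟩
  · rw [linearIndependent_fin2]
    constructor
    · intro h
      have h1 := congrArg (fun x : EuclideanSpace ℝ (Fin 2) => x 1) h
      simp [vec] at h1
      exact absurd h1 (ne_of_gt hβ)
    · intro c h
      have h1 := congrArg (fun x : EuclideanSpace ℝ (Fin 2) => x 1) h
      have h0 := congrArg (fun x : EuclideanSpace ℝ (Fin 2) => x 0) h
      simp [vec] at h0 h1
      have hc : c = -1 := by linarith
      rw [hc] at h1
      linarith
  · intro w hw hw0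
    rw [Submodule.mem_span_pair] at hw
    obtain ⟨m, n, rfl⟩ := hw
    rw [hsmul, hnu, dh_norm_vec]
    apply Real.sqrt_le_sqrt
    have hmn : ¬(m = 0 ∧ n = 0) := by
      rintro ⟨rfl, rfl⟩
      apply hw0
      rw [hsmul]
      ext i; fin_cases i <;> simp [vec]
    by_cases hn : n = 0
    · subst hn
      have hm : m ≠ 0 := by tauto
      have : (1:ℤ) ≤ m ^ 2 := by nlinarith [Int.one_le_abs hm, sq_abs m]
      have hm' : (1:ℝ) ≤ (m:ℝ) ^ 2 := by exact_mod_cast this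
      nlinarith
    · by_cases hn1 : n = 1 ∨ n = -1
      · have h2mn : (2 * m + n) ≠ 0 := by rcases hn1 with rfl | rfl <;> omega
        have : (1:ℤ) ≤ (2 * m + n) ^ 2 := by
          nlinarith [Int.one_le_abs h2mn, sq_abs (2 * m + n)]
        have hmr : (1:ℝ) ≤ (2 * (m:ℝ) + n) ^ 2 := by exact_mod_cast this
        have hn2 : ((n:ℝ)) ^ 2 = 1 := by rcases hn1 with rfl | rfl <;> norm_num
        nlinarith
      · have h4 : (4:ℤ) ≤ n ^ 2 := by
          have habs : 2 ≤ |n| := le_abs.mpr (by omega)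
          nlinarith [sq_abs n]
        have h4r : (4:ℝ) ≤ (n:ℝ) ^ 2 := by exact_mod_cast h4
        nlinarith [sq_nonneg ((m:ℝ) + n/2), mul_le_mul_of_nonneg_right h4r (sq_nonneg β)]

/-- Let `K ⊆ ℝ` be a subfield and `τ₀ = a₀ + b₀ i ∈ F` with `a₀, b₀ ∈ K`.
Define the deep hole sequence by `a_k = 1/2`, `b_k = (a_{k-1}² + b_{k-1}² - a_{k-1})/(2 b_{k-1})`.
Then there is `n ≥ 1` with `n ≤ max {1, ⌈log₂(2b₀/√3)⌉}` such that `b_k ∈ K`, `b_k > 0` for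
`1 ≤ k ≤ n`, `τ_k ∈ F` for `1 ≤ k ≤ n - 1`, `|τ_n| ≤ 1`, and `Λ_{τ_n}` is well-rounded. -/
theorem deep_hole_sequence_terminates
    (K : Subfield ℝ) (a₀ b₀ : ℝ) (ha₀K : a₀ ∈ K) (hb₀K : b₀ ∈ K)
    (ha₀0 : 0 ≤ a₀) (ha₀2 : a₀ ≤ 1 / 2) (hb₀0 : 0 < b₀) (hF : 1 ≤ a₀ ^ 2 + b₀ ^ 2)
    (a b : ℕ → ℝ) (h0a : a 0 = a₀) (h0b : b 0 = b₀)
    (hra : ∀ k, a (k + 1) = 1 / 2)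
    (hrb : ∀ k, b (k + 1) = (a k ^ 2 + b k ^ 2 - a k) / (2 * b k)) :
    ∃ n : ℕ, 0 < n ∧
      (n : ℤ) ≤ max 1 ⌈Real.logb 2 (2 * b₀ / Real.sqrt 3)⌉ ∧
      (∀ k, 1 ≤ k → k ≤ n → b k ∈ K ∧ 0 < b k) ∧
      (∀ k, 1 ≤ k → k ≤ n - 1 → 1 ≤ 1 / 4 + b k ^ 2) ∧
      1 / 4 + b n ^ 2 ≤ 1 ∧
      IsWellRounded
        (Submodule.span ℤ ({vec 1 0, vec (1 / 2) (b n)} : Set (EuclideanSpace ℝ (Fin 2)))) := by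
  classical
  have h2K : (2:ℝ) ∈ K := by
    have := add_mem (one_mem K) (one_mem K); rwa [one_add_one_eq_two] at this
  have haK : ∀ k, a k ∈ K := by
    intro k
    cases k with
    | zero => rw [h0a]; exact ha₀K
    | succ k => rw [hra]; exact div_mem (one_mem K) h2K
  have haF : ∀ k, 0 ≤ a k ∧ a k ≤ 1/2 := by
    intro k
    cases k with
    | zero => rw [h0a]; exact ⟨ha₀0, ha₀2⟩
    | succ k => rw [hra]; norm_num
  have hKall : ∀ k, b k ∈ K := by
    intro k
    induction k with
    | zero => rw [h0b]; exact hb₀K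
    | succ k ih =>
      rw [hrb]
      exact div_mem (sub_mem (add_mem (pow_mem (haK k) 2) (pow_mem ih 2)) (haK k))
        (mul_mem h2K ih)
  have hstep : ∀ k, 1 ≤ a k ^ 2 + b k ^ 2 → 0 < b k →
      0 < b (k+1) ∧ 1 ≤ 12 * b (k+1) ^ 2 ∧ b (k+1) ≤ b k / 2 := by
    intro k h1 h2
    rw [hrb]
    exact dh_step (a k) (b k) (haF k).1 (haF k).2 h2 h1
  -- main invariant
  have H : ∀ k : ℕ, (∀ j, 1 ≤ j → j < k + 1 → 1 < 1/4 + b j ^ 2) →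
      0 < b (k+1) ∧ 1 ≤ 12 * b (k+1) ^ 2 ∧ b (k+1) ≤ b₀ / 2 ^ (k+1) := by
    intro k
    induction k with
    | zero =>
      intro _
      have h := hstep 0 (by rw [h0a, h0b]; exact hF) (by rw [h0b]; exact hb₀0)
      refine ⟨h.1, h.2.1, ?_⟩
      have := h.2.2
      rw [h0b] at this
      rw [pow_one]
      linarith
    | succ k ih =>
      intro hrun
      have hprev := ih (fun j hj hjk => hrun j hj (by omega))
      have hk1 : 1 < 1/4 + b (k+1) ^ 2 := hrun (k+1) (by omega) (by omega)
      have haeq : a (k+1) = 1/2 := hra k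
      have hstepk := hstep (k+1) (by rw [haeq]; nlinarith) hprev.1
      refine ⟨hstepk.1, hstepk.2.1, ?_⟩
      have h1 : b (k+1+1) ≤ b (k+1) / 2 := hstepk.2.2
      have h2 : b (k+1) ≤ b₀ / 2 ^ (k+1) := hprev.2.2
      have heq : b₀ / 2 ^ (k+1) / 2 = b₀ / 2 ^ (k+1+1) := by
        rw [div_div, ← pow_succ]
      linarith
  -- existence of a terminating index
  have hex : ∃ k, 1 ≤ k ∧ 1/4 + b k ^ 2 ≤ 1 := by
    by_contra hc
    push_neg at hc
    obtain ⟨N, hN⟩ := pow_unbounded_of_one_lt (2 * b₀) (one_lt_two (α := ℝ))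
    have hH := H N (fun j hj _ => hc j hj)
    have hbig : 1 < 1/4 + b (N+1) ^ 2 := hc (N+1) (by omega)
    have hp : (0:ℝ) < 2 ^ (N+1) := by positivity
    have hsmall : b₀ / 2 ^ (N+1) < 1/2 := by
      rw [div_lt_iff₀ hp, pow_succ]
      nlinarith [pow_pos (show (0:ℝ) < 2 by norm_num) N]
    nlinarith [hH.1, hH.2.2]
  set n := Nat.find hex with hn_def
  have hn := Nat.find_spec hex
  have hrun_n : ∀ j, 1 ≤ j → j < n → 1 < 1/4 + b j ^ 2 := by
    intro j h1 h2
    have := Nat.find_min hex h2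
    push_neg at this
    exact this h1
  obtain ⟨m, hm⟩ : ∃ m, n = m + 1 := ⟨n - 1, by omega⟩
  have Hmain := H m (fun j hj hjk => hrun_n j hj (by omega))
  rw [← hm] at Hmain
  refine ⟨n, by omega, ?_, ?_, ?_, hn.2, dh_wr (b n) Hmain.1 Hmain.2.1 hn.2⟩
  · -- the bound on n
    by_cases hm0 : m = 0
    · have : n = 1 := by omega
      rw [this]
      exact le_max_of_le_left le_rfl
    · obtain ⟨m', hm'⟩ : ∃ m', m = m' + 1 := ⟨m - 1, by omega⟩
      have hBm := H m' (fun j hj hjk => hrun_n j hj (by omega))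
      rw [← hm'] at hBm
      have hFm : 1 < 1/4 + b m ^ 2 := hrun_n m (by omega) (by omega)
      have hs3 : Real.sqrt 3 ^ 2 = 3 := Real.sq_sqrt (by norm_num)
      have hs3pos : 0 < Real.sqrt 3 := Real.sqrt_pos.mpr (by norm_num)
      have hbm : Real.sqrt 3 / 2 < b m := by nlinarith [hBm.1]
      have hpm : (0:ℝ) < 2 ^ m := by positivity
      have h2m : (2:ℝ) ^ m < 2 * b₀ / Real.sqrt 3 := by
        rw [lt_div_iff₀ hs3pos]
        have hmul : b m * 2 ^ m ≤ b₀ := (le_div_iff₀ hpm).mp hBm.2.2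
        nlinarith [mul_lt_mul_of_pos_left hbm hpm]
      have hlog : (m:ℝ) < Real.logb 2 (2 * b₀ / Real.sqrt 3) := by
        have := Real.logb_lt_logb (b := 2) (by norm_num) hpm h2m
        rwa [Real.logb_pow, Real.logb_self_eq_one (by norm_num), mul_one] at this
      have : (m:ℤ) < ⌈Real.logb 2 (2 * b₀ / Real.sqrt 3)⌉ := Int.lt_ceil.mpr (by
        push_cast; exact hlog)
      refine le_max_of_le_right ?_
      rw [hm]
      push_cast
      omega
  · -- b k ∈ K ∧ 0 < b k for 1 ≤ k ≤ n
    intro k h1 h2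
    obtain ⟨j, rfl⟩ : ∃ j, k = j + 1 := ⟨k - 1, by omega⟩
    have := H j (fun i hi hik => hrun_n i hi (by omega))
    exact ⟨hKall _, this.1⟩
  · -- F-condition for 1 ≤ k ≤ n - 1
    intro k h1 h2
    have : k < n := by omega
    linarith [hrun_n k h1 this]
end

section
/- Let a, b be real numbers with b > 0, a ∈ ℚ and b² ∈ ℚ, and let τ = a + bi, τ₁ = 1/2 + b₁·i where b₁ = (a² + b² − a)/(2b). Then there exists a positive integer ℓ such that ℓ·Λ_{τ₁} ⊆ Λ_τ, i.e. the lattice Λ_τ = span_ℤ{(1,0), (a,b)} contains the scaled copy ℓ·span_ℤ{(1,0), (1/2, b₁)} of the deep hole lattice as a sublattice. -/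
private lemma den_mul_self (q : ℚ) : (q.den : ℚ) * q = q.num := by
  rw [mul_comm]; exact_mod_cast Rat.mul_den_eq_num q

/-- Let `τ = a + bi` with `b > 0`, `a ∈ ℚ` and `b² ∈ ℚ` (so `Λ_τ` is
arithmetic), and let `τ₁ = 1/2 + b₁ i` with `b₁ = (a² + b² - a)/(2b)`. Then there is a positive
integer `ℓ` with `ℓ Λ_{τ₁} ⊆ Λ_τ`, i.e. `Λ_τ` contains the scaled copy `ℓ Λ_{τ₁}` of the deep
hole lattice as a sublattice. -/
theorem arithmetic_lattice_contains_scaled_deep_hole_lattice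
    (a b : ℝ) (hb : 0 < b)
    (haQ : ∃ q : ℚ, (q : ℝ) = a) (hb2Q : ∃ q : ℚ, (q : ℝ) = b ^ 2) :
    ∃ ℓ : ℕ, 0 < ℓ ∧
      ∀ v ∈ Submodule.span ℤ
          ({vec 1 0, vec (1 / 2) ((a ^ 2 + b ^ 2 - a) / (2 * b))} :
            Set (EuclideanSpace ℝ (Fin 2))),
        (ℓ : ℝ) • v ∈
          Submodule.span ℤ ({vec 1 0, vec a b} : Set (EuclideanSpace ℝ (Fin 2))) := by
  obtain ⟨u, hu⟩ := haQ
  obtain ⟨q2, hq2⟩ := hb2Q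
  have hq2pos : (0:ℚ) < q2 := by
    have : (0:ℝ) < (q2:ℝ) := by rw [hq2]; positivity
    exact_mod_cast this
  set t : ℚ := (u ^ 2 + q2 - u) / (2 * q2) with ht
  refine ⟨2 * t.den * (t * u).den, by positivity, ?_⟩
  set ℓ : ℕ := 2 * t.den * (t * u).den with hℓ
  set n : ℤ := 2 * (t * u).den * t.num with hn
  set m : ℤ := (t.den : ℤ) * (t * u).den - 2 * t.den * (t * u).num with hm
  have hnq : (n : ℚ) = (ℓ : ℚ) * t := by
    rw [hn, hℓ]
    push_cast
    rw [← den_mul_self t]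
    ring
  have hmq : (m : ℚ) = (ℓ : ℚ) / 2 - (n : ℚ) * u := by
    rw [hm, hn, hℓ]
    push_cast
    rw [← den_mul_self (t * u), ← den_mul_self t]
    ring
  -- real versions
  have hb2 : (q2 : ℝ) = b ^ 2 := hq2
  have hbne : b ≠ 0 := ne_of_gt hb
  have hnr : (n : ℝ) * b = (ℓ : ℝ) * ((a ^ 2 + b ^ 2 - a) / (2 * b)) := by
    have := congrArg (fun q : ℚ => (q : ℝ)) hnq
    push_cast at this
    rw [ht] at this
    push_cast at this
    rw [hu, hq2] at this
    rw [this]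
    field_simp
  have hmr : (m : ℝ) = (ℓ : ℝ) / 2 - (n : ℝ) * a := by
    have := congrArg (fun q : ℚ => (q : ℝ)) hmq
    push_cast at this
    rw [hu] at this
    exact this
  -- the key equation on the second generator
  have hgen : (ℓ : ℝ) • vec (1 / 2) ((a ^ 2 + b ^ 2 - a) / (2 * b))
      = m • vec 1 0 + n • vec a b := by
    rw [← Int.cast_smul_eq_zsmul ℝ m, ← Int.cast_smul_eq_zsmul ℝ n]
    ext i
    fin_cases i
    · show (ℓ : ℝ) * (1 / 2) = (m : ℝ) * 1 + (n : ℝ) * a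
      rw [hmr]; ring
    · show (ℓ : ℝ) * ((a ^ 2 + b ^ 2 - a) / (2 * b)) = (m : ℝ) * 0 + (n : ℝ) * b
      rw [← hnr]; ring
  intro v hv
  induction hv using Submodule.span_induction with
  | mem x hx =>
      rcases hx with h | h
      · subst h
        rw [show ((ℓ : ℝ)) • vec 1 0 = (ℓ : ℤ) • vec 1 0 by
          rw [← Int.cast_smul_eq_zsmul ℝ]; norm_num]
        exact Submodule.smul_mem _ _ (Submodule.subset_span (Or.inl rfl))
      · rw [Set.mem_singleton_iff] at h
        subst h
        rw [hgen]
        exact Submodule.add_mem _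
          (Submodule.smul_mem _ _ (Submodule.subset_span (Or.inl rfl)))
          (Submodule.smul_mem _ _ (Submodule.subset_span (Or.inr rfl)))
  | zero => simp
  | add x y _ _ hx hy => rw [smul_add]; exact Submodule.add_mem _ hx hy
  | smul c x _ hx => rw [smul_comm]; exact Submodule.smul_mem _ _ hx
end
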